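/- Soundness of transducer composition: for transducers T : A+B and T' : B+C, ⟦T ; T'⟧ = ⟦T⟧ ; ⟦T'⟧, where composition of trace sets is θ ; θ' = { t ∈ 𝒫(A+C)* | ∃u ∈ θ ∥ θ'. u↾(A+C) = t }. -/

import Mathlib

/-- A transducer over label alphabet `A`: rounds are subsets of `A`. -/
structure Transducer (A : Type) where
  S : Type
  init : S
  delta : S → Set A → S → Prop

/-- Extension of the transition relation to traces (sequences of rounds). -/
inductive ExtDelta {A : Type} (T : Transducer A) : T.S → List (Set A) → T.S → Prop
  | nil (q : T.S) : ExtDelta T q [] q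
  | snoc {s s'' s' : T.S} {t : List (Set A)} {V : Set A} :
      ExtDelta T s t s'' → T.delta s'' V s' → ExtDelta T s (t ++ [V]) s'

/-- The trace set of a transducer. -/
def traces {A : Type} (T : Transducer A) : Set (List (Set A)) :=
  {t | ∃ s, ExtDelta T T.init t s}

/-- Intersection (synchronized product) of transducers. -/
def inter {A : Type} (T T' : Transducer A) : Transducer A where
  S := T.S × T'.S
  init := (T.init, T'.init)
  delta := fun p V q => T.delta p.1 V q.1 ∧ T'.delta p.2 V q.2

/-- Witness traces reaching a state. -/
def witnessSet {A : Type} (T : Transducer A) (s : T.S) : Set (List (Set A)) :=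
  {t | t ∈ traces T ∧ ExtDelta T T.init t s}

/-- Projection of a trace onto a sub-signature `X`. -/
def projTrace {L : Type} (X : Set L) (t : List (Set L)) : List (Set L) :=
  t.map (fun V => V ∩ X)

/-- Interaction (synchronization on projected rounds) of transducers with
signatures `X` and `Y`. -/
def interactT {L : Type} (X Y : Set L) (T T' : Transducer L) : Transducer L where
  S := T.S × T'.S
  init := (T.init, T'.init)
  delta := fun p V q => V ⊆ X ∪ Y ∧ T.delta p.1 (V ∩ X) q.1 ∧ T'.delta p.2 (V ∩ Y) q.2

/-- Projection of a transducer onto sub-signature `X`. -/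
def projT {L : Type} (X : Set L) (T : Transducer L) : Transducer L where
  S := T.S
  init := T.init
  delta := fun s V s' => ∃ W, V = W ∩ X ∧ T.delta s W s'

/-- Interaction of trace sets over signatures `X` and `Y`. -/
def interactSet {L : Type} (X Y : Set L) (θ θ' : Set (List (Set L))) :
    Set (List (Set L)) :=
  {t | (∀ V ∈ t, V ⊆ X ∪ Y) ∧ projTrace X t ∈ θ ∧ projTrace Y t ∈ θ'}

/-- Composition of a transducer over `A+B` with one over `B+C`. -/
def composeT {L : Type} (A B C : Set L) (T T' : Transducer L) : Transducer L :=
  projT (A ∪ C) (interactT (A ∪ B) (B ∪ C) T T')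


/-!
A run of an interaction transducer is exactly a pair of runs of its components on the two
projections of the trace, since each round projects independently onto either signature. A run
of a projected transducer is the projection of a run of the original one, with the hidden labels
of each round chosen along the way. Hence `traces (T ∥ T') = traces T ∥ traces T'` and
`traces (T↾X) = (traces T)↾X`, and composition is their combination.
-/

namespace ExtDelta

variable {A : Type} {T : Transducer A}

theorem nil_iff {s s' : T.S} : ExtDelta T s [] s' ↔ s' = s := by
  refine ⟨fun h => ?_, fun h => h ▸ nil s⟩
  generalize hnil : ([] : List (Set A)) = t at h
  cases h with
  | nil => rfl
  | snoc => simp at hnil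

theorem snoc_iff {s s' : T.S} {t : List (Set A)} {V : Set A} :
    ExtDelta T s (t ++ [V]) s' ↔ ∃ m, ExtDelta T s t m ∧ T.delta m V s' := by
  refine ⟨fun h => ?_, fun ⟨_, ht, hV⟩ => snoc ht hV⟩
  generalize hsnoc : t ++ [V] = u at h
  cases h with
  | nil => simp at hsnoc
  | snoc ht hV =>
    obtain ⟨rfl, hV'⟩ := List.append_inj' hsnoc rfl
    obtain rfl := List.singleton_inj.mp hV'
    exact ⟨_, ht, hV⟩

theorem map {T₂ : Transducer A} {f : T.S → T₂.S} {g : Set A → Set A}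
    (hf : ∀ s V s', T.delta s V s' → T₂.delta (f s) (g V) (f s'))
    {s s' : T.S} {t : List (Set A)} (h : ExtDelta T s t s') :
    ExtDelta T₂ (f s) (t.map g) (f s') := by
  induction h with
  | nil => exact nil _
  | snoc _ hV ih =>
    rw [List.map_append]
    exact snoc ih (hf _ _ _ hV)

theorem forall_mem {P : Set A → Prop} (hP : ∀ s V s', T.delta s V s' → P V)
    {s s' : T.S} {t : List (Set A)} (h : ExtDelta T s t s') : ∀ V ∈ t, P V := by
  induction h with
  | nil => simp
  | snoc _ hV ih => simpa [or_imp, forall_and] using ⟨ih, hP _ _ _ hV⟩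

end ExtDelta

section

variable {L : Type} (X Y : Set L) (T T' : Transducer L)

theorem projTrace_append (t u : List (Set L)) :
    projTrace X (t ++ u) = projTrace X t ++ projTrace X u :=
  List.map_append

theorem extDelta_projT_iff (s s' : (projT X T).S) (t : List (Set L)) :
    ExtDelta (projT X T) s t s' ↔ ∃ u, projTrace X u = t ∧ ExtDelta T s u s' := by
  constructor
  · intro h
    induction h with
    | nil => exact ⟨[], rfl, ExtDelta.nil (T := T) _⟩
    | snoc _ hV ih =>
      obtain ⟨u, rfl, hu⟩ := ih
      obtain ⟨W, rfl, hW⟩ := hV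
      exact ⟨u ++ [W], projTrace_append .., .snoc hu hW⟩
  · rintro ⟨u, rfl, hu⟩
    exact hu.map (T := T) (T₂ := projT X T) (f := id) fun _ V _ hV => ⟨V, rfl, hV⟩

theorem extDelta_interactT_iff (p q : (interactT X Y T T').S) (t : List (Set L)) :
    ExtDelta (interactT X Y T T') p t q ↔
      (∀ V ∈ t, V ⊆ X ∪ Y) ∧ ExtDelta T p.1 (projTrace X t) q.1 ∧
        ExtDelta T' p.2 (projTrace Y t) q.2 := by
  constructor
  · intro h
    exact ⟨h.forall_mem (T := interactT X Y T T') fun _ _ _ hV => hV.1,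
      h.map (T := interactT X Y T T') (f := Prod.fst) fun _ _ _ hV => hV.2.1,
      h.map (T := interactT X Y T T') (f := Prod.snd) fun _ _ _ hV => hV.2.2⟩
  · rintro ⟨hsub, h, h'⟩
    obtain ⟨q, q'⟩ := q
    induction t using List.reverseRecOn generalizing q q' with
    | nil =>
      obtain rfl := ExtDelta.nil_iff.mp h
      obtain rfl := ExtDelta.nil_iff.mp h'
      exact .nil _
    | append_singleton t V ih =>
      rw [projTrace_append] at h h'
      obtain ⟨m, hm, hV⟩ := ExtDelta.snoc_iff.mp h
      obtain ⟨m', hm', hV'⟩ := ExtDelta.snoc_iff.mp h'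
      have hsub' : ∀ W ∈ t, W ⊆ X ∪ Y := fun W hW => hsub W (List.mem_append_left _ hW)
      exact .snoc (ih hsub' m m' hm hm') ⟨hsub V (by simp), hV, hV'⟩

theorem traces_projT : traces (projT X T) = projTrace X '' traces T := by
  ext t
  constructor
  · rintro ⟨s, hs⟩
    obtain ⟨u, rfl, hu⟩ := (extDelta_projT_iff X T _ _ t).mp hs
    exact ⟨u, ⟨s, hu⟩, rfl⟩
  · rintro ⟨u, ⟨s, hu⟩, rfl⟩
    exact ⟨s, (extDelta_projT_iff X T _ _ _).mpr ⟨u, rfl, hu⟩⟩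

theorem traces_interactT :
    traces (interactT X Y T T') = interactSet X Y (traces T) (traces T') := by
  ext t
  simp only [traces, interactSet, extDelta_interactT_iff, Set.mem_ofPred_eq]
  constructor
  · rintro ⟨q, hsub, h, h'⟩
    exact ⟨hsub, ⟨_, h⟩, ⟨_, h'⟩⟩
  · rintro ⟨hsub, ⟨q, h⟩, ⟨q', h'⟩⟩
    exact ⟨(q, q'), hsub, h, h'⟩

end

theorem compose_traces {L : Type} (A B C : Set L) (T T' : Transducer L) :
    traces (composeT A B C T T')
      = {t | ∃ u ∈ interactSet (A ∪ B) (B ∪ C) (traces T) (traces T'),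
              projTrace (A ∪ C) u = t} := by
  rw [composeT, traces_projT, traces_interactT]
  rfl
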